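/- Let A be the Fell C*-algebra of a continuous Hilbert bundle over a locally compact Hausdorff space T. Then (Δ, {H_s^Δ}_{s∈Δ}, Ω^Δ) is a continuous Hilbert bundle over the compact Hausdorff space Δ = lim← βX^I; in particular Ω^Δ is a C(Δ)-module under the pointwise action and is closed under local uniform approximation. -/

import Mathlib

/- Common definitions: continuous Hilbert bundles and Fell (spatial continuous
trace) C*-algebras, following Fell (1961). -/

noncomputable section

/-- A vector field `ξ` is a local uniform limit of members of `S`. -/
def LocUnifApprox {T : Type*} [TopologicalSpace T] {H : T → Type*}
    [∀ t, NormedAddCommGroup (H t)] (S : Set (∀ t, H t)) (ξ : ∀ t, H t) : Prop :=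
  ∀ (t₀ : T) (ε : ℝ), 0 < ε → ∃ U : Set T, IsOpen U ∧ t₀ ∈ U ∧
    ∃ ω ∈ S, ∀ t ∈ U, ‖ω t - ξ t‖ < ε

/-- Axioms (I)-(IV) of a continuous Hilbert bundle `(T, {H t}, Ω)`. -/
structure IsCtsHilbertBundle {T : Type*} [TopologicalSpace T] {H : T → Type*}
    [∀ t, NormedAddCommGroup (H t)] [∀ t, InnerProductSpace ℂ (H t)]
    (Ω : Set (∀ t, H t)) : Prop where
  /-- axiom (I): `Ω` is a `C(T)`-module (additive part) -/
  zero_mem : (fun t => (0 : H t)) ∈ Ω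
  add_mem : ∀ ω ∈ Ω, ∀ ν ∈ Ω, (fun t => ω t + ν t) ∈ Ω
  /-- axiom (I): `C(T)`-action -/
  smul_mem : ∀ (f : C(T, ℂ)), ∀ ω ∈ Ω, (fun t => f t • ω t) ∈ Ω
  /-- axiom (II) -/
  full : ∀ (t : T) (v : H t), ∃ ω ∈ Ω, ω t = v
  /-- axiom (III) -/
  norm_continuous : ∀ ω ∈ Ω, Continuous fun t => ‖ω t‖
  /-- axiom (IV) -/
  closed_locUnif : ∀ ξ : ∀ t, H t, LocUnifApprox Ω ξ → ξ ∈ Ω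

variable {T : Type*} [TopologicalSpace T] {H : T → Type*}
  [∀ t, NormedAddCommGroup (H t)] [∀ t, InnerProductSpace ℂ (H t)]
  [∀ t, CompleteSpace (H t)]

/-- An operator field is weakly continuous w.r.t. the bundle `Ω`. -/
def WeaklyCts (Ω : Set (∀ t, H t)) (a : ∀ t, H t →L[ℂ] H t) : Prop :=
  ∀ ω₁ ∈ Ω, ∀ ω₂ ∈ Ω, Continuous fun t => (inner ℂ (a t (ω₁ t)) (ω₂ t) : ℂ)

/-- An operator field is almost finite-dimensional w.r.t. the bundle `Ω`. -/
def AlmostFinDim (Ω : Set (∀ t, H t)) (a : ∀ t, H t →L[ℂ] H t) : Prop :=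
  ∀ (t₀ : T) (ε : ℝ), 0 < ε → ∃ U : Set T, IsOpen U ∧ t₀ ∈ U ∧
    ∃ (n : ℕ) (ω : Fin n → ∀ t, H t), (∀ i, ω i ∈ Ω) ∧ ∀ t ∈ U,
      LinearIndependent ℂ (fun i => ω i t) ∧
      ∃ p : H t →L[ℂ] H t, IsIdempotentElem p ∧ IsSelfAdjoint p ∧
        LinearMap.range (p : H t →ₗ[ℂ] H t) = Submodule.span ℂ (Set.range fun i => ω i t) ∧
        ‖p * a t * p - a t‖ < ε

/-- The Fell (spatial continuous-trace) C*-algebra `A(T, {H t}, Ω)`: all weakly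
continuous, almost finite-dimensional operator fields whose pointwise norm
function lies in `C₀(T)`; a set of operator fields with pointwise operations. -/
def FellAlgebra (Ω : Set (∀ t, H t)) : Set (∀ t, H t →L[ℂ] H t) :=
  {a | WeaklyCts Ω a ∧ AlmostFinDim Ω a ∧ (Continuous fun t => ‖a t‖) ∧
    Filter.Tendsto (fun t => ‖a t‖) (Filter.cocompact T) (nhds 0)}

/-- `I` is a (closed, two-sided, star) ideal of the C*-algebra of operator
fields `A` (with pointwise operations and supremum norm). -/
structure IsIdealOf (A I : Set (∀ t, H t →L[ℂ] H t)) : Prop where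
  subset : I ⊆ A
  zero_mem : (0 : ∀ t, H t →L[ℂ] H t) ∈ I
  add_mem : ∀ a ∈ I, ∀ b ∈ I, a + b ∈ I
  smul_mem : ∀ (c : ℂ), ∀ a ∈ I, c • a ∈ I
  star_mem : ∀ a ∈ I, star a ∈ I
  mul_mem_left : ∀ a ∈ A, ∀ b ∈ I, a * b ∈ I
  mul_mem_right : ∀ a ∈ I, ∀ b ∈ A, a * b ∈ I
  norm_closed : ∀ a ∈ A, (∀ ε : ℝ, 0 < ε → ∃ b ∈ I, ∀ t, ‖a t - b t‖ < ε) → a ∈ I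

/-- `I` is an essential ideal of `A`: it has nonzero intersection with every
nonzero ideal of `A`. -/
def IsEssentialIdealOf (A I : Set (∀ t, H t →L[ℂ] H t)) : Prop :=
  IsIdealOf A I ∧
    ∀ J, IsIdealOf A J → (∃ b ∈ J, b ≠ 0) → ∃ c, c ∈ I ∧ c ∈ J ∧ c ≠ 0

/-- The open set `X^I ⊆ T` associated with an ideal `I`
(the complement of `Z^I = {t | b t = 0 ∀ b ∈ I}`). -/
def idealSupp (I : Set (∀ t, H t →L[ℂ] H t)) : Set T :=
  {t | ∃ b ∈ I, b t ≠ 0}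

/-- `Ω_b`: the bounded vector fields of the bundle. -/
def boundedFields (Ω : Set (∀ t, H t)) : Set (∀ t, H t) :=
  {ω | ω ∈ Ω ∧ ∃ M : ℝ, ∀ t, ‖ω t‖ ≤ M}

/-- The rank-one operator field `Θ_{ω,ν} : ξ ↦ ⟨ξ, ν⟩·ω` (inner product linear
in `ξ`, conjugate-linear in `ν`). -/
def rankOneField (ω ν : ∀ t, H t) : ∀ t, H t →L[ℂ] H t :=
  fun t => (innerSL ℂ (ν t)).smulRight (ω t)

/-- `F(S)`: finite sums of rank-one fields `Θ_{ω,ν}` with `ω, ν ∈ S`. -/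
def finRankFields (S : Set (∀ t, H t)) : Set (∀ t, H t →L[ℂ] H t) :=
  {a | ∃ (n : ℕ) (ω ν : Fin n → ∀ t, H t), (∀ i, ω i ∈ S) ∧ (∀ i, ν i ∈ S) ∧
    a = fun t => ∑ i, rankOneField (ω i) (ν i) t}

/-- An operator field `x` is strictly continuous with respect to a family `F`
of operator fields. -/
def StrictlyCts (F : Set (∀ t, H t →L[ℂ] H t)) (x : ∀ t, H t →L[ℂ] H t) : Prop :=
  ∀ (t₀ : T), ∀ a ∈ F, ∀ ε : ℝ, 0 < ε → ∃ U : Set T, IsOpen U ∧ t₀ ∈ U ∧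
    ∃ b ∈ F, ∀ t ∈ U, ‖(x t - b t) * a t‖ + ‖a t * (x t - b t)‖ < ε

/-- The concrete realisation (Akemann–Pedersen–Tomiyama) of the multiplier
algebra: bounded operator fields, strictly continuous w.r.t. `F`. -/
def MultSet (F : Set (∀ t, H t →L[ℂ] H t)) : Set (∀ t, H t →L[ℂ] H t) :=
  {x | (∃ C : ℝ, ∀ t, ‖x t‖ ≤ C) ∧ StrictlyCts F x}

/-- Conjugation of an operator by a unitary (linear isometric equivalence). -/
def conjCLM {E F : Type*} [NormedAddCommGroup E] [NormedAddCommGroup F]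
    [NormedSpace ℂ E] [NormedSpace ℂ F] (e : E ≃ₗᵢ[ℂ] F) (x : E →L[ℂ] E) :
    F →L[ℂ] F :=
  ((e.toContinuousLinearEquiv : E →L[ℂ] F).comp x).comp
    (e.symm.toContinuousLinearEquiv : F →L[ℂ] E)

end
noncomputable section

variable {T : Type} [TopologicalSpace T] {H : T → Type}
  [∀ t, NormedAddCommGroup (H t)] [∀ t, InnerProductSpace ℂ (H t)]
  [∀ t, CompleteSpace (H t)]

/-- The index set `I_ess(A)` of essential ideals of the Fell algebra of `Ω`
(directed by reverse inclusion). -/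
def EssIdeal (Ω : Set (∀ t, H t)) : Type _ :=
  {I : Set (∀ t, H t →L[ℂ] H t) // IsEssentialIdealOf (FellAlgebra Ω) I}

/-- `Ω^I`: the local uniform limits of the induced fields `E^I = bar '' Ω_b`. -/
def OmegaExt {βX : Type} {HI : βX → Type} [TopologicalSpace βX]
    [∀ u, NormedAddCommGroup (HI u)]
    (Ω : Set (∀ t, H t)) (bar : (∀ t, H t) → ∀ u, HI u) : Set (∀ u, HI u) :=
  {ν | LocUnifApprox (bar '' boundedFields Ω) ν}

end

/-!
For `ω ∈ Ω_b` the field `s ↦ Ψ_{I,s} (ω̄^I (Φ_I s))` on `Δ` does not depend on the essential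
ideal `I`, since any two essential ideals contain a common one (their intersection). These
fields are therefore closed under sums and scalar multiples; they have continuous norms, and
their values are dense in every fibre. Their local uniform limits are exactly `Ω^Δ`, boundedness
being automatic on the compact space `Δ`. The local uniform closure of any such family is a
continuous Hilbert bundle: the module axioms and norm continuity pass to local uniform limits,
and a fibre vector that is only approximated is hit exactly by a uniformly convergent
telescoping series of corrections, each truncated to be small everywhere but left unchanged
at the given point.
-/

open Filter Topology

section LocUnifApprox

variable {X : Type*} [TopologicalSpace X] {E : X → Type*} [∀ x, NormedAddCommGroup (E x)]
  {S S' : Set (∀ x, E x)} {ξ ζ : ∀ x, E x}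

theorem locUnifApprox_of_mem (h : ξ ∈ S) : LocUnifApprox S ξ :=
  fun _ _ hε => ⟨Set.univ, isOpen_univ, trivial, ξ, h, fun x _ => by simpa using hε⟩

theorem locUnifApprox_of_uniform (h : ∀ ε : ℝ, 0 < ε → ∃ ω ∈ S, ∀ x, ‖ω x - ξ x‖ < ε) :
    LocUnifApprox S ξ := fun _ ε hε =>
  let ⟨ω, hω, hωξ⟩ := h ε hε
  ⟨Set.univ, isOpen_univ, trivial, ω, hω, fun x _ => hωξ x⟩

theorem LocUnifApprox.trans (h : ∀ μ ∈ S, LocUnifApprox S' μ) (hξ : LocUnifApprox S ξ) :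
    LocUnifApprox S' ξ := by
  intro x₀ ε hε
  obtain ⟨U, hU, hxU, μ, hμ, hμξ⟩ := hξ x₀ (ε / 2) (by linarith)
  obtain ⟨V, hV, hxV, ω, hω, hωμ⟩ := h μ hμ x₀ (ε / 2) (by linarith)
  refine ⟨U ∩ V, hU.inter hV, ⟨hxU, hxV⟩, ω, hω, fun x hx => ?_⟩
  calc ‖ω x - ξ x‖ ≤ ‖ω x - μ x‖ + ‖μ x - ξ x‖ := norm_sub_le_norm_sub_add_norm_sub _ _ _
    _ < ε := by linarith [hωμ x hx.2, hμξ x hx.1]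

theorem LocUnifApprox.mono (hSS' : S ⊆ S') (hξ : LocUnifApprox S ξ) : LocUnifApprox S' ξ :=
  hξ.trans fun _ hμ => locUnifApprox_of_mem (hSS' hμ)

theorem LocUnifApprox.continuous_norm (hS : ∀ ω ∈ S, Continuous fun x => ‖ω x‖)
    (hξ : LocUnifApprox S ξ) : Continuous fun x => ‖ξ x‖ := by
  refine continuous_of_locally_uniform_approx_of_continuousAt fun x₀ u hu => ?_
  obtain ⟨ε, hε, hεu⟩ := Metric.mem_uniformity_dist.mp hu
  obtain ⟨U, hU, hxU, ω, hω, hωξ⟩ := hξ x₀ ε hε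
  refine ⟨U, hU.mem_nhds hxU, fun x => ‖ω x‖, (hS ω hω).continuousAt, fun x hx => hεu ?_⟩
  calc dist ‖ξ x‖ ‖ω x‖ ≤ ‖ξ x - ω x‖ := dist_norm_norm_le _ _
    _ < ε := by rw [norm_sub_rev]; exact hωξ x hx

theorem LocUnifApprox.exists_bound [CompactSpace X] (hS : ∀ ω ∈ S, Continuous fun x => ‖ω x‖)
    (hξ : LocUnifApprox S ξ) : ∃ M : ℝ, ∀ x, ‖ξ x‖ ≤ M :=
  let ⟨M, hM⟩ := (isCompact_range (hξ.continuous_norm hS)).bddAbove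
  ⟨M, fun x => hM (Set.mem_range_self x)⟩

theorem LocUnifApprox.add (hS : ∀ ω ∈ S, ∀ ν ∈ S, (fun x => ω x + ν x) ∈ S)
    (hξ : LocUnifApprox S ξ) (hζ : LocUnifApprox S ζ) :
    LocUnifApprox S fun x => ξ x + ζ x := by
  intro x₀ ε hε
  obtain ⟨U, hU, hxU, ω, hω, hωξ⟩ := hξ x₀ (ε / 2) (by linarith)
  obtain ⟨V, hV, hxV, ν, hν, hνζ⟩ := hζ x₀ (ε / 2) (by linarith)
  refine ⟨U ∩ V, hU.inter hV, ⟨hxU, hxV⟩, _, hS ω hω ν hν, fun x hx => ?_⟩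
  calc ‖ω x + ν x - (ξ x + ζ x)‖ = ‖(ω x - ξ x) + (ν x - ζ x)‖ := by rw [add_sub_add_comm]
    _ ≤ ‖ω x - ξ x‖ + ‖ν x - ζ x‖ := norm_add_le _ _
    _ < ε := by linarith [hωξ x hx.1, hνζ x hx.2]

theorem LocUnifApprox.smul [∀ x, NormedSpace ℂ (E x)]
    (hS : ∀ (c : ℂ), ∀ ω ∈ S, (fun x => c • ω x) ∈ S) (hξn : Continuous fun x => ‖ξ x‖)
    (f : C(X, ℂ)) (hξ : LocUnifApprox S ξ) : LocUnifApprox S fun x => f x • ξ x := by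
  intro x₀ ε hε
  set c := f x₀
  set B := ‖ξ x₀‖ + 1
  set δ := ε / (B + ‖c‖ + 1)
  have hδ : 0 < δ := by positivity
  have hδε : δ * (‖c‖ + B) < ε := by
    rw [div_mul_eq_mul_div, div_lt_iff₀ (by positivity)]
    nlinarith
  obtain ⟨U, hU, hxU, ω, hω, hωξ⟩ := hξ x₀ δ hδ
  let V := {x | ‖f x - c‖ < δ ∧ ‖ξ x‖ < B}
  have hV : IsOpen V :=
    (isOpen_lt (f.continuous.sub continuous_const).norm continuous_const).inter
      (isOpen_lt hξn continuous_const)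
  have hxV : x₀ ∈ V := ⟨by simpa [c] using hδ, by simp [B]⟩
  refine ⟨U ∩ V, hU.inter hV, ⟨hxU, hxV⟩, _, hS c ω hω, fun x hx => ?_⟩
  have hfx : ‖c - f x‖ ≤ δ := by rw [norm_sub_rev]; exact hx.2.1.le
  calc ‖c • ω x - f x • ξ x‖ = ‖c • (ω x - ξ x) + (c - f x) • ξ x‖ := by
        rw [smul_sub, sub_smul, sub_add_sub_cancel]
    _ ≤ ‖c‖ * ‖ω x - ξ x‖ + ‖c - f x‖ * ‖ξ x‖ := by
        rw [← norm_smul, ← norm_smul]; exact norm_add_le _ _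
    _ ≤ ‖c‖ * δ + δ * B := by gcongr; exacts [(hωξ x hx.1).le, hx.2.2.le]
    _ < ε := by linarith

theorem exists_mem_tendsto_of_dist_le_geometric_two [∀ x, CompleteSpace (E x)]
    (hclosed : ∀ ξ, LocUnifApprox S ξ → ξ ∈ S) {σ : ℕ → ∀ x, E x} (hσ : ∀ n, σ n ∈ S)
    {C : ℝ} (hσC : ∀ n x, dist (σ n x) (σ (n + 1) x) ≤ C / 2 / 2 ^ n) :
    ∃ ξ ∈ S, ∀ x, Tendsto (fun n => σ n x) atTop (𝓝 (ξ x)) := by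
  have hlim : ∀ x, Tendsto (fun n => σ n x) atTop (𝓝 (limUnder atTop fun n => σ n x)) :=
    fun x => (cauchySeq_of_le_geometric_two (hσC · x)).tendsto_limUnder
  refine ⟨_, hclosed _ (locUnifApprox_of_uniform fun ε hε => ?_), hlim⟩
  obtain ⟨n, hn⟩ : ∃ n : ℕ, C / 2 ^ n < ε :=
    (((tendsto_pow_atTop_atTop_of_one_lt one_lt_two).const_div_atTop C).eventually
      (gt_mem_nhds hε)).exists
  refine ⟨σ n, hσ n, fun x => ?_⟩
  rw [← dist_eq_norm]
  exact (dist_le_of_le_geometric_two_of_tendsto (hσC · x) (hlim x) n).trans_lt hn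

end LocUnifApprox

section FibreClosure

variable {X : Type*} [TopologicalSpace X] {E : X → Type*} [∀ x, NormedAddCommGroup (E x)]
  [∀ x, NormedSpace ℂ (E x)] {M : Set (∀ x, E x)}

theorem exists_truncation (hsmul : ∀ f : C(X, ℂ), ∀ ω ∈ M, (fun x => f x • ω x) ∈ M)
    {ξ : ∀ x, E x} (hξ : ξ ∈ M) (hξn : Continuous fun x => ‖ξ x‖) {r : ℝ} (hr : 0 < r) :
    ∃ η ∈ M, (∀ x, ‖η x‖ ≤ r) ∧ ∀ x, ‖ξ x‖ ≤ r / 2 → η x = ξ x := by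
  -- equal to `1` where `‖ξ x‖ ≤ r / 2` and to `0` where `‖ξ x‖ ≥ r`
  let g : X → ℝ := fun x => min 1 (max 0 (2 - 2 * ‖ξ x‖ / r))
  have hg : Continuous g := by fun_prop
  have hg0 : ∀ x, 0 ≤ g x := fun x => le_min zero_le_one (le_max_left _ _)
  refine ⟨fun x => (g x : ℂ) • ξ x, hsmul ⟨fun x => (g x : ℂ), by fun_prop⟩ ξ hξ,
    fun x => ?_, fun x hx => ?_⟩
  · rw [norm_smul, Complex.norm_real, Real.norm_of_nonneg (hg0 x)]
    rcases le_or_gt ‖ξ x‖ r with hle | hgt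
    · calc g x * ‖ξ x‖ ≤ 1 * r := mul_le_mul (min_le_left _ _) hle (norm_nonneg _) zero_le_one
        _ = r := one_mul r
    · have hneg : 2 - 2 * ‖ξ x‖ / r < 0 := by
        rw [sub_neg, lt_div_iff₀ hr]; linarith
      simp [g, max_eq_left hneg.le, hr.le]
  · have hge : 1 ≤ 2 - 2 * ‖ξ x‖ / r := by
      rw [le_sub_comm, div_le_iff₀ hr]; linarith
    simp [g, min_eq_left (hge.trans (le_max_right _ _))]

/-- The differences of an approximating sequence are truncated so as to become uniformly
summable while staying unchanged at `s`. -/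
theorem exists_mem_apply_eq_of_approx [∀ x, CompleteSpace (E x)]
    (hadd : ∀ ω ∈ M, ∀ ν ∈ M, (fun x => ω x + ν x) ∈ M)
    (hsmul : ∀ f : C(X, ℂ), ∀ ω ∈ M, (fun x => f x • ω x) ∈ M)
    (hnorm : ∀ ω ∈ M, Continuous fun x => ‖ω x‖)
    (hclosed : ∀ ξ, LocUnifApprox M ξ → ξ ∈ M) {s : X} {v : E s}
    (hv : ∀ ε : ℝ, 0 < ε → ∃ ω ∈ M, ‖ω s - v‖ < ε) : ∃ ξ ∈ M, ξ s = v := by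
  have hsub : ∀ ω ∈ M, ∀ ν ∈ M, (fun x => ω x - ν x) ∈ M := fun ω hω ν hν => by
    simpa [sub_eq_add_neg] using hadd ω hω _ (hsmul (ContinuousMap.const X (-1)) ν hν)
  choose μ hμM hμv using fun n : ℕ => hv (1 / 8 / 2 ^ n) (by positivity)
  have hμstep : ∀ n, ‖μ (n + 1) s - μ n s‖ ≤ 1 / 2 / 2 ^ n / 2 := fun n =>
    calc ‖μ (n + 1) s - μ n s‖ ≤ ‖μ (n + 1) s - v‖ + ‖μ n s - v‖ := by
          rw [← norm_neg (μ n s - v), neg_sub]; exact norm_sub_le_norm_sub_add_norm_sub _ _ _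
      _ ≤ 1 / 8 / 2 ^ (n + 1) + 1 / 8 / 2 ^ n := add_le_add (hμv (n + 1)).le (hμv n).le
      _ ≤ 1 / 2 / 2 ^ n / 2 := by rw [pow_succ]; field_simp; norm_num
  choose η hηM hηle hηeq using fun n =>
    exists_truncation hsmul (hsub _ (hμM (n + 1)) _ (hμM n))
      (hnorm _ (hsub _ (hμM (n + 1)) _ (hμM n))) (r := 1 / 2 / 2 ^ n) (by positivity)
  let σ : ℕ → ∀ x, E x := fun N x => μ 0 x + ∑ n ∈ Finset.range N, η n x
  have hσM : ∀ N, σ N ∈ M := by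
    intro N
    induction N with
    | zero => simpa [σ] using hμM 0
    | succ N ih => simpa only [σ, Finset.sum_range_succ, add_assoc] using hadd _ ih _ (hηM N)
  have hσs : ∀ N, σ N s = μ N s := fun N => by
    simp only [σ, Finset.sum_congr rfl fun n _ => hηeq n s (hμstep n)]
    rw [Finset.sum_range_sub (fun n => μ n s), add_sub_cancel]
  obtain ⟨ξ, hξM, hσξ⟩ := exists_mem_tendsto_of_dist_le_geometric_two hclosed hσM
    (C := 1) fun N x => by
      simpa [σ, Finset.sum_range_succ, dist_eq_norm, norm_sub_rev] using hηle N x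
  have hμlim : Tendsto (fun N => μ N s) atTop (𝓝 v) := by
    rw [tendsto_iff_norm_sub_tendsto_zero]
    refine squeeze_zero (fun N => norm_nonneg _) (fun N => (hμv N).le) ?_
    exact (tendsto_pow_atTop_atTop_of_one_lt one_lt_two).const_div_atTop _
  refine ⟨ξ, hξM, tendsto_nhds_unique (hσξ s) ?_⟩
  simpa only [hσs] using hμlim

theorem isCtsHilbertBundle_setOf_locUnifApprox {X : Type*} [TopologicalSpace X]
    {E : X → Type*} [∀ x, NormedAddCommGroup (E x)] [∀ x, InnerProductSpace ℂ (E x)]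
    [∀ x, CompleteSpace (E x)] {S : Set (∀ x, E x)}
    (hadd : ∀ ω ∈ S, ∀ ν ∈ S, (fun x => ω x + ν x) ∈ S)
    (hsmul : ∀ (c : ℂ), ∀ ω ∈ S, (fun x => c • ω x) ∈ S)
    (hnorm : ∀ ω ∈ S, Continuous fun x => ‖ω x‖)
    (hdense : ∀ (x : X) (v : E x) (ε : ℝ), 0 < ε → ∃ ω ∈ S, ‖ω x - v‖ < ε) :
    IsCtsHilbertBundle {ξ : ∀ x, E x | LocUnifApprox S ξ} := by
  have add_mem : ∀ ξ ∈ {ξ | LocUnifApprox S ξ}, ∀ ζ ∈ {ξ | LocUnifApprox S ξ},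
      (fun x => ξ x + ζ x) ∈ {ξ | LocUnifApprox S ξ} :=
    fun ξ hξ ζ hζ => LocUnifApprox.add hadd hξ hζ
  have norm_continuous : ∀ ξ ∈ {ξ | LocUnifApprox S ξ}, Continuous fun x => ‖ξ x‖ :=
    fun ξ hξ => LocUnifApprox.continuous_norm hnorm hξ
  have smul_mem : ∀ (f : C(X, ℂ)), ∀ ξ ∈ {ξ | LocUnifApprox S ξ},
      (fun x => f x • ξ x) ∈ {ξ | LocUnifApprox S ξ} :=
    fun f ξ hξ => LocUnifApprox.smul hsmul (norm_continuous ξ hξ) f hξ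
  have closed_locUnif : ∀ ξ, LocUnifApprox {ξ | LocUnifApprox S ξ} ξ →
      ξ ∈ {ξ | LocUnifApprox S ξ} :=
    fun ξ hξ => hξ.trans fun _ hμ => hμ
  refine ⟨fun x₀ ε hε => ?_, add_mem, smul_mem, fun x v => ?_, norm_continuous,
    closed_locUnif⟩
  · obtain ⟨ω, hω, -⟩ := hdense x₀ 0 1 one_pos
    exact ⟨Set.univ, isOpen_univ, trivial, _, hsmul 0 ω hω, fun x _ => by simpa using hε⟩
  · exact exists_mem_apply_eq_of_approx add_mem smul_mem norm_continuous closed_locUnif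
      fun ε hε => (hdense x v ε hε).imp fun ω hω => ⟨locUnifApprox_of_mem hω.1, hω.2⟩

end FibreClosure

section EssentialIdeals

variable {T : Type*} {H : T → Type*} [∀ t, NormedAddCommGroup (H t)]
  [∀ t, InnerProductSpace ℂ (H t)] [∀ t, CompleteSpace (H t)]
  {A I J : Set (∀ t, H t →L[ℂ] H t)}

theorem IsIdealOf.inter (hI : IsIdealOf A I) (hJ : IsIdealOf A J) : IsIdealOf A (I ∩ J) where
  subset _ ha := hI.subset ha.1
  zero_mem := ⟨hI.zero_mem, hJ.zero_mem⟩
  add_mem a ha b hb := ⟨hI.add_mem a ha.1 b hb.1, hJ.add_mem a ha.2 b hb.2⟩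
  smul_mem c a ha := ⟨hI.smul_mem c a ha.1, hJ.smul_mem c a ha.2⟩
  star_mem a ha := ⟨hI.star_mem a ha.1, hJ.star_mem a ha.2⟩
  mul_mem_left a ha b hb := ⟨hI.mul_mem_left a ha b hb.1, hJ.mul_mem_left a ha b hb.2⟩
  mul_mem_right a ha b hb := ⟨hI.mul_mem_right a ha.1 b hb, hJ.mul_mem_right a ha.2 b hb⟩
  norm_closed a ha happrox :=
    ⟨hI.norm_closed a ha fun ε hε => (happrox ε hε).imp fun _ hb => ⟨hb.1.1, hb.2⟩,
      hJ.norm_closed a ha fun ε hε => (happrox ε hε).imp fun _ hb => ⟨hb.1.2, hb.2⟩⟩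

theorem IsEssentialIdealOf.inter (hI : IsEssentialIdealOf A I) (hJ : IsEssentialIdealOf A J) :
    IsEssentialIdealOf A (I ∩ J) := by
  refine ⟨hI.1.inter hJ.1, fun K hK hne => ?_⟩
  obtain ⟨c, hcJ, hcK, hc⟩ := hJ.2 K hK hne
  obtain ⟨d, hdI, hdJK, hd⟩ := hI.2 (J ∩ K) (hJ.1.inter hK) ⟨c, ⟨hcJ, hcK⟩, hc⟩
  exact ⟨d, ⟨hdI, hdJK.1⟩, hdJK.2, hd⟩

end EssentialIdeals

section BoundedFields

variable {T : Type*} [TopologicalSpace T] {H : T → Type*} [∀ t, NormedAddCommGroup (H t)]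
  [∀ t, InnerProductSpace ℂ (H t)] {Ω : Set (∀ t, H t)}

theorem add_mem_boundedFields (hΩ : IsCtsHilbertBundle Ω)
    {ω ν : ∀ t, H t} (hω : ω ∈ boundedFields Ω) (hν : ν ∈ boundedFields Ω) :
    ω + ν ∈ boundedFields Ω :=
  let ⟨Mω, hMω⟩ := hω.2
  let ⟨Mν, hMν⟩ := hν.2
  ⟨hΩ.add_mem ω hω.1 ν hν.1, Mω + Mν, fun t => (norm_add_le _ _).trans (add_le_add (hMω t) (hMν t))⟩

theorem smul_mem_boundedFields (hΩ : IsCtsHilbertBundle Ω) (c : ℂ)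
    {ω : ∀ t, H t} (hω : ω ∈ boundedFields Ω) : c • ω ∈ boundedFields Ω :=
  let ⟨M, hM⟩ := hω.2
  ⟨hΩ.smul_mem (ContinuousMap.const T c) ω hω.1, ‖c‖ * M, fun t => by
    rw [Pi.smul_apply, norm_smul]; exact mul_le_mul_of_nonneg_left (hM t) (norm_nonneg c)⟩

end BoundedFields

section LimitBundle

variable {T : Type} [TopologicalSpace T] {H : T → Type} [∀ t, NormedAddCommGroup (H t)]
  [∀ t, InnerProductSpace ℂ (H t)] [∀ t, CompleteSpace (H t)] {Ω : Set (∀ t, H t)}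
  {βX : EssIdeal Ω → Type} {HI : ∀ I : EssIdeal Ω, βX I → Type}
  [∀ I u, NormedAddCommGroup (HI I u)] [∀ I u, InnerProductSpace ℂ (HI I u)]
  {Δ : Type} {HΔ : Δ → Type} [∀ s, NormedAddCommGroup (HΔ s)]
  [∀ s, InnerProductSpace ℂ (HΔ s)]
  (bar : ∀ I : EssIdeal Ω, (∀ t, H t) → ∀ u, HI I u) (Φ : ∀ I : EssIdeal Ω, Δ → βX I)
  (Ψ : ∀ (I : EssIdeal Ω) (s : Δ), HI I (Φ I s) ≃ₗᵢ[ℂ] HΔ s)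

theorem EssIdeal.exists_subset_inter (I J : EssIdeal Ω) :
    ∃ K : EssIdeal Ω, K.1 ⊆ I.1 ∧ K.1 ⊆ J.1 :=
  ⟨⟨I.1 ∩ J.1, I.2.inter J.2⟩, Set.inter_subset_left, Set.inter_subset_right⟩

/-- The fields `ω̄^I ∘ Φ_I` on `Δ`, `ω ∈ Ω_b`. -/
def inducedFields : Set (∀ s, HΔ s) :=
  {μ | ∃ (I : EssIdeal Ω), ∃ ω ∈ boundedFields Ω, μ = fun s => Ψ I s (bar I ω (Φ I s))}

theorem add_mem_inducedFields (hΩ : IsCtsHilbertBundle Ω)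
    (hbar_add : ∀ I, ∀ ω ∈ boundedFields Ω, ∀ ν ∈ boundedFields Ω,
      bar I (ω + ν) = bar I ω + bar I ν)
    (hΨcompat : ∀ I J, I.1 ⊆ J.1 → ∀ s : Δ, ∀ ω ∈ boundedFields Ω,
      Ψ I s (bar I ω (Φ I s)) = Ψ J s (bar J ω (Φ J s))) :
    ∀ μ ∈ inducedFields bar Φ Ψ, ∀ μ' ∈ inducedFields bar Φ Ψ,
      (fun s => μ s + μ' s) ∈ inducedFields bar Φ Ψ := by
  rintro _ ⟨I, ω, hω, rfl⟩ _ ⟨J, ν, hν, rfl⟩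
  obtain ⟨K, hKI, hKJ⟩ := EssIdeal.exists_subset_inter I J
  refine ⟨K, ω + ν, add_mem_boundedFields hΩ hω hν, funext fun s => ?_⟩
  rw [hbar_add K ω hω ν hν, Pi.add_apply, map_add, hΨcompat K I hKI s ω hω,
    hΨcompat K J hKJ s ν hν]

theorem smul_mem_inducedFields (hΩ : IsCtsHilbertBundle Ω)
    (hbar_smul : ∀ I, ∀ (c : ℂ), ∀ ω ∈ boundedFields Ω, bar I (c • ω) = c • bar I ω) :
    ∀ (c : ℂ), ∀ μ ∈ inducedFields bar Φ Ψ, (fun s => c • μ s) ∈ inducedFields bar Φ Ψ := by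
  rintro c _ ⟨I, ω, hω, rfl⟩
  refine ⟨I, c • ω, smul_mem_boundedFields hΩ c hω, funext fun s => ?_⟩
  rw [hbar_smul I c ω hω, Pi.smul_apply, map_smul]

variable [∀ I, TopologicalSpace (βX I)]

/-- The fields `ν ∘ Φ_I` on `Δ`, `ν ∈ Ω^I`. -/
def liftedFields : Set (∀ s, HΔ s) :=
  {μ | ∃ (I : EssIdeal Ω) (ν : ∀ u, HI I u), ν ∈ OmegaExt Ω (bar I) ∧
    μ = fun s => Ψ I s (ν (Φ I s))}

theorem inducedFields_subset_liftedFields : inducedFields bar Φ Ψ ⊆ liftedFields bar Φ Ψ := by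
  rintro _ ⟨I, ω, hω, rfl⟩
  exact ⟨I, bar I ω, locUnifApprox_of_mem ⟨ω, hω, rfl⟩, rfl⟩

variable [TopologicalSpace Δ]

theorem locUnifApprox_inducedFields_of_mem_liftedFields (hΦ : ∀ I, Continuous (Φ I))
    {μ : ∀ s, HΔ s} (hμ : μ ∈ liftedFields bar Φ Ψ) : LocUnifApprox (inducedFields bar Φ Ψ) μ := by
  obtain ⟨I, ν, hν, rfl⟩ := hμ
  intro s₀ ε hε
  obtain ⟨V, hV, hs₀V, _, ⟨ω, hω, rfl⟩, hων⟩ := hν (Φ I s₀) ε hε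
  refine ⟨Φ I ⁻¹' V, hV.preimage (hΦ I), hs₀V, _, ⟨I, ω, hω, rfl⟩, fun s hs => ?_⟩
  rw [← map_sub, LinearIsometryEquiv.norm_map]
  exact hων (Φ I s) hs

theorem locUnifApprox_liftedFields_iff (hΦ : ∀ I, Continuous (Φ I)) {ξ : ∀ s, HΔ s} :
    LocUnifApprox (liftedFields bar Φ Ψ) ξ ↔ LocUnifApprox (inducedFields bar Φ Ψ) ξ :=
  ⟨LocUnifApprox.trans fun _ => locUnifApprox_inducedFields_of_mem_liftedFields bar Φ Ψ hΦ,
    LocUnifApprox.mono (inducedFields_subset_liftedFields bar Φ Ψ)⟩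

theorem continuous_norm_of_mem_inducedFields
    (hbar_inner_cont : ∀ I, ∀ ω ∈ boundedFields Ω, ∀ ν ∈ boundedFields Ω,
      Continuous fun u => (inner ℂ (bar I ω u) (bar I ν u) : ℂ))
    (hΦ : ∀ I, Continuous (Φ I)) {μ : ∀ s, HΔ s} (hμ : μ ∈ inducedFields bar Φ Ψ) :
    Continuous fun s => ‖μ s‖ := by
  obtain ⟨I, ω, hω, rfl⟩ := hμ
  simp only [LinearIsometryEquiv.norm_map]
  simp only [norm_eq_sqrt_re_inner (𝕜 := ℂ)]
  exact ((RCLike.continuous_re.comp (hbar_inner_cont I ω hω ω hω)).sqrt).comp (hΦ I)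

theorem exists_mem_inducedFields_near (hΦ : ∀ I, Continuous (Φ I))
    (hΨdense : ∀ (s : Δ) (v : HΔ s) (ε : ℝ), 0 < ε →
      ∃ (I : EssIdeal Ω) (ν : ∀ u, HI I u), ν ∈ OmegaExt Ω (bar I) ∧
        ‖Ψ I s (ν (Φ I s)) - v‖ < ε)
    (s : Δ) (v : HΔ s) (ε : ℝ) (hε : 0 < ε) :
    ∃ μ ∈ inducedFields bar Φ Ψ, ‖μ s - v‖ < ε := by
  obtain ⟨I, ν, hν, hνv⟩ := hΨdense s v (ε / 2) (by linarith)
  obtain ⟨U, -, hsU, μ, hμ, hμν⟩ := locUnifApprox_inducedFields_of_mem_liftedFields bar Φ Ψ hΦ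
    ⟨I, ν, hν, rfl⟩ s (ε / 2) (by linarith)
  refine ⟨μ, hμ, ?_⟩
  calc ‖μ s - v‖ ≤ ‖μ s - Ψ I s (ν (Φ I s))‖ + ‖Ψ I s (ν (Φ I s)) - v‖ :=
        norm_sub_le_norm_sub_add_norm_sub _ _ _
    _ < ε := by linarith [hμν s hsU]

end LimitBundle

theorem limit_bundle_isCtsHilbertBundle_general
    {T : Type} [TopologicalSpace T]
    {H : T → Type} [∀ t, NormedAddCommGroup (H t)] [∀ t, InnerProductSpace ℂ (H t)]
    [∀ t, CompleteSpace (H t)]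
    (Ω : Set (∀ t, H t)) (hΩ : IsCtsHilbertBundle Ω)
    -- Stone–Čech data over every essential ideal:
    {βX : EssIdeal Ω → Type} [∀ I, TopologicalSpace (βX I)]
    {HI : ∀ I : EssIdeal Ω, βX I → Type}
    [∀ I u, NormedAddCommGroup (HI I u)] [∀ I u, InnerProductSpace ℂ (HI I u)]
    (bar : ∀ I : EssIdeal Ω, (∀ t, H t) → ∀ u, HI I u)
    (hbar_add : ∀ I, ∀ ω ∈ boundedFields Ω, ∀ ν ∈ boundedFields Ω,
      bar I (ω + ν) = bar I ω + bar I ν)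
    (hbar_smul : ∀ I, ∀ (c : ℂ), ∀ ω ∈ boundedFields Ω, bar I (c • ω) = c • bar I ω)
    (hbar_inner_cont : ∀ I, ∀ ω ∈ boundedFields Ω, ∀ ν ∈ boundedFields Ω,
      Continuous fun u => (inner ℂ (bar I ω u) (bar I ν u) : ℂ))
    -- the inverse limit `Δ = lim← βX^I` with canonical surjections `Φ_I`:
    {Δ : Type} [TopologicalSpace Δ] [CompactSpace Δ]
    (Φ : ∀ I : EssIdeal Ω, Δ → βX I)
    (hΦcont : ∀ I, Continuous (Φ I))
    -- the limit fibres `H_s^Δ` with canonical unitaries `Ψ_{I,s}`: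
    {HΔ : Δ → Type} [∀ s, NormedAddCommGroup (HΔ s)]
    [∀ s, InnerProductSpace ℂ (HΔ s)] [∀ s, CompleteSpace (HΔ s)]
    (Ψ : ∀ (I : EssIdeal Ω) (s : Δ), HI I (Φ I s) ≃ₗᵢ[ℂ] HΔ s)
    (hΨcompat : ∀ I J (h : I.1 ⊆ J.1) (s : Δ), ∀ ω ∈ boundedFields Ω,
      Ψ I s (bar I ω (Φ I s)) = Ψ J s (bar J ω (Φ J s)))
    (hΨdense : ∀ (s : Δ) (v : HΔ s) (ε : ℝ), 0 < ε →
      ∃ (I : EssIdeal Ω) (ν : ∀ u, HI I u), ν ∈ OmegaExt Ω (bar I) ∧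
        ‖Ψ I s (ν (Φ I s)) - v‖ < ε) :
    -- conclusion: `(Δ, {H_s^Δ}, Ω^Δ)` is a continuous Hilbert bundle
    IsCtsHilbertBundle
      {ξ : ∀ s, HΔ s | (∃ M : ℝ, ∀ s, ‖ξ s‖ ≤ M) ∧
        LocUnifApprox
          {μ : ∀ s, HΔ s | ∃ (I : EssIdeal Ω) (ν : ∀ u, HI I u),
            ν ∈ OmegaExt Ω (bar I) ∧ μ = fun s => Ψ I s (ν (Φ I s))} ξ} := by
  have hnorm : ∀ μ ∈ inducedFields bar Φ Ψ, Continuous fun s => ‖μ s‖ :=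
    fun _ => continuous_norm_of_mem_inducedFields bar Φ Ψ hbar_inner_cont hΦcont
  have hΩΔ : {ξ : ∀ s, HΔ s | (∃ M : ℝ, ∀ s, ‖ξ s‖ ≤ M) ∧
      LocUnifApprox (liftedFields bar Φ Ψ) ξ} = {ξ | LocUnifApprox (inducedFields bar Φ Ψ) ξ} := by
    ext ξ
    rw [Set.mem_ofPred_eq, Set.mem_ofPred_eq, locUnifApprox_liftedFields_iff bar Φ Ψ hΦcont]
    exact and_iff_right_of_imp (LocUnifApprox.exists_bound hnorm)
  change IsCtsHilbertBundle {ξ | _ ∧ LocUnifApprox (liftedFields bar Φ Ψ) ξ}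
  rw [hΩΔ]
  exact isCtsHilbertBundle_setOf_locUnifApprox
    (add_mem_inducedFields bar Φ Ψ hΩ hbar_add hΨcompat)
    (smul_mem_inducedFields bar Φ Ψ hΩ hbar_smul) hnorm
    (exists_mem_inducedFields_near bar Φ Ψ hΦcont hΨdense)

/-- Let `A` be the Fell C*-algebra of a continuous Hilbert
bundle over a locally compact Hausdorff space `T`.  With `Δ = lim← βX^I` the
inverse limit of the Stone–Čech compactifications `βX^I` over the essential
ideals of `A` (a compact Hausdorff space with canonical surjections
`Φ_I : Δ → βX^I`), fibres `H_s^Δ = lim→ H^I_{Φ_I(s)}` (canonical unitaries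
`Ψ_{I,s}`), and `Ω^Δ` the bounded vector fields on `Δ` which are local uniform
limits of the fields `ν∘Φ_I` (`ν ∈ Ω^I`), the triple `(Δ, {H_s^Δ}, Ω^Δ)` is a
continuous Hilbert bundle. -/
theorem limit_bundle_isCtsHilbertBundle
    {T : Type} [TopologicalSpace T] [LocallyCompactSpace T] [T2Space T]
    {H : T → Type} [∀ t, NormedAddCommGroup (H t)] [∀ t, InnerProductSpace ℂ (H t)]
    [∀ t, CompleteSpace (H t)]
    (Ω : Set (∀ t, H t)) (hΩ : IsCtsHilbertBundle Ω)
    -- Stone–Čech data over every essential ideal: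
    {βX : EssIdeal Ω → Type} [∀ I, TopologicalSpace (βX I)]
    [∀ I, CompactSpace (βX I)] [∀ I, T2Space (βX I)]
    (ι : ∀ I : EssIdeal Ω, idealSupp I.1 → βX I)
    (hι : ∀ I, Topology.IsEmbedding (ι I)) (hιd : ∀ I, DenseRange (ι I))
    {HI : ∀ I : EssIdeal Ω, βX I → Type}
    [∀ I u, NormedAddCommGroup (HI I u)] [∀ I u, InnerProductSpace ℂ (HI I u)]
    [∀ I u, CompleteSpace (HI I u)]
    (bar : ∀ I : EssIdeal Ω, (∀ t, H t) → ∀ u, HI I u)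
    (hbar_add : ∀ I, ∀ ω ∈ boundedFields Ω, ∀ ν ∈ boundedFields Ω,
      bar I (ω + ν) = bar I ω + bar I ν)
    (hbar_smul : ∀ I, ∀ (c : ℂ), ∀ ω ∈ boundedFields Ω, bar I (c • ω) = c • bar I ω)
    (hbar_inner_cont : ∀ I, ∀ ω ∈ boundedFields Ω, ∀ ν ∈ boundedFields Ω,
      Continuous fun u => (inner ℂ (bar I ω u) (bar I ν u) : ℂ))
    (hbar_inner_eq : ∀ I, ∀ ω ∈ boundedFields Ω, ∀ ν ∈ boundedFields Ω,
      ∀ x : idealSupp I.1, (inner ℂ (bar I ω (ι I x)) (bar I ν (ι I x)) : ℂ) =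
        (inner ℂ (ω x.1) (ν x.1) : ℂ))
    (hbar_dense : ∀ I (u : βX I) (v : HI I u) (ε : ℝ), 0 < ε →
      ∃ ω ∈ boundedFields Ω, ‖bar I ω u - v‖ < ε)
    -- the connecting maps `Φ_{JI} : βX^I → βX^J` (for `I ⊆ J`):
    (hXmono : ∀ I J : EssIdeal Ω, I.1 ⊆ J.1 →
      (idealSupp I.1 : Set T) ⊆ idealSupp J.1)
    (Φmap : ∀ I J : EssIdeal Ω, I.1 ⊆ J.1 → βX I → βX J)
    (hΦmap_cont : ∀ I J h, Continuous (Φmap I J h))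
    (hΦmap_ι : ∀ I J (h : I.1 ⊆ J.1) (x : idealSupp I.1),
      Φmap I J h (ι I x) = ι J (Set.inclusion (hXmono I J h) x))
    -- the inverse limit `Δ = lim← βX^I` with canonical surjections `Φ_I`:
    {Δ : Type} [TopologicalSpace Δ] [CompactSpace Δ] [T2Space Δ]
    (Φ : ∀ I : EssIdeal Ω, Δ → βX I)
    (hΦcont : ∀ I, Continuous (Φ I)) (hΦsurj : ∀ I, Function.Surjective (Φ I))
    (hΦcompat : ∀ I J (h : I.1 ⊆ J.1) (s : Δ), Φmap I J h (Φ I s) = Φ J s)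
    (hΦsep : ∀ s s' : Δ, (∀ I, Φ I s = Φ I s') → s = s')
    (hΦlim : ∀ x : ∀ I : EssIdeal Ω, βX I,
      (∀ I J (h : I.1 ⊆ J.1), Φmap I J h (x I) = x J) → ∃ s : Δ, ∀ I, Φ I s = x I)
    (hbasis : ∀ W : Set Δ, IsOpen W → ∀ s ∈ W, ∃ (I : EssIdeal Ω) (V : Set (βX I)),
      IsOpen V ∧ s ∈ Φ I ⁻¹' V ∧ Φ I ⁻¹' V ⊆ W)
    -- the limit fibres `H_s^Δ` with canonical unitaries `Ψ_{I,s}`: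
    {HΔ : Δ → Type} [∀ s, NormedAddCommGroup (HΔ s)]
    [∀ s, InnerProductSpace ℂ (HΔ s)] [∀ s, CompleteSpace (HΔ s)]
    (Ψ : ∀ (I : EssIdeal Ω) (s : Δ), HI I (Φ I s) ≃ₗᵢ[ℂ] HΔ s)
    (hΨcompat : ∀ I J (h : I.1 ⊆ J.1) (s : Δ), ∀ ω ∈ boundedFields Ω,
      Ψ I s (bar I ω (Φ I s)) = Ψ J s (bar J ω (Φ J s)))
    (hΨdense : ∀ (s : Δ) (v : HΔ s) (ε : ℝ), 0 < ε →
      ∃ (I : EssIdeal Ω) (ν : ∀ u, HI I u), ν ∈ OmegaExt Ω (bar I) ∧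
        ‖Ψ I s (ν (Φ I s)) - v‖ < ε) :
    -- conclusion: `(Δ, {H_s^Δ}, Ω^Δ)` is a continuous Hilbert bundle
    IsCtsHilbertBundle
      {ξ : ∀ s, HΔ s | (∃ M : ℝ, ∀ s, ‖ξ s‖ ≤ M) ∧
        LocUnifApprox
          {μ : ∀ s, HΔ s | ∃ (I : EssIdeal Ω) (ν : ∀ u, HI I u),
            ν ∈ OmegaExt Ω (bar I) ∧ μ = fun s => Ψ I s (ν (Φ I s))} ξ} :=
  limit_bundle_isCtsHilbertBundle_general Ω hΩ bar hbar_add hbar_smul hbar_inner_cont Φ hΦcont Ψ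
    hΨcompat hΨdense
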